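/- arXiv:1902.02260 — 5 statements merged into one kernel-verified Lean document; each statement's English description precedes it below -/
import Mathlib

section
/- Let A be an n×n complex matrix, let z ∈ ℂⁿ be a right singular vector of A corresponding to a singular value σ > 0 (i.e., ‖z‖ = 1 and A*Az = σ²z), let b ∈ ℂⁿ, let x be the exact solution of Ax = b, and let x0 ∈ ℂⁿ. Then the scalar α = ⟨b − Ax0, Az⟩/‖Az‖², which is the unique minimizer over k ∈ ℂ of ‖b − Ax0 − kAz‖, also minimizes ‖x − x0 − kz‖ over k ∈ ℂ; that is, for every k ∈ ℂ, ‖x − x0 − αz‖ ≤ ‖x − x0 − kz‖. -/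
/-!
Since `Aᴴ A z = σ² z`, we have `⟪A z, A w⟫ = σ² ⟪z, w⟫` for every `w`; with `b - A x0 = A (x - x0)`
and `‖A z‖² = σ²` this turns `α` into `⟪z, x - x0⟫`. Then `α • z` is the orthogonal projection of
`x - x0` onto the line `ℂ ∙ z`, which is the point of that line closest to `x - x0`.
-/

open Matrix

section InnerProductSpace

variable {𝕜 E F : Type*} [RCLike 𝕜] [NormedAddCommGroup E] [InnerProductSpace 𝕜 E]
  [NormedAddCommGroup F] [InnerProductSpace 𝕜 F]

theorem norm_sub_inner_smul_le_norm_sub_smul {z : E} (hz : ‖z‖ = 1) (v : E) (k : 𝕜) :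
    ‖v - inner 𝕜 z v • z‖ ≤ ‖v - k • z‖ := by
  rw [← Submodule.starProjection_unit_singleton 𝕜 hz, Submodule.starProjection_minimal]
  exact ciInf_le ⟨0, Set.forall_mem_range.2 fun _ => norm_nonneg _⟩
    (⟨k • z, Submodule.smul_mem _ k (Submodule.mem_span_singleton_self z)⟩ : 𝕜 ∙ z)

variable [FiniteDimensional 𝕜 E] [FiniteDimensional 𝕜 F]

theorem inner_map_map_of_adjoint_map_eq_smul {T : E →ₗ[𝕜] F} {z : E} {r : ℝ}
    (h : T.adjoint (T z) = (r : 𝕜) • z) (w : E) :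
    inner 𝕜 (T z) (T w) = r * inner 𝕜 z w := by
  rw [← LinearMap.adjoint_inner_left, h, inner_smul_left, RCLike.conj_ofReal]

theorem inner_map_map_div_norm_map_sq_of_adjoint_map_eq_smul {T : E →ₗ[𝕜] F} {z : E} {r : ℝ}
    (hr : r ≠ 0) (hz : ‖z‖ = 1) (h : T.adjoint (T z) = (r : 𝕜) • z) (w : E) :
    inner 𝕜 (T z) (T w) / (‖T z‖ : 𝕜) ^ 2 = inner 𝕜 z w := by
  have hnorm : (‖T z‖ : 𝕜) ^ 2 = r := by
    rw [← inner_self_eq_norm_sq_to_K, inner_map_map_of_adjoint_map_eq_smul h,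
      inner_self_eq_norm_sq_to_K, hz]
    simp
  rw [hnorm, inner_map_map_of_adjoint_map_eq_smul h,
    mul_div_cancel_left₀ _ (by exact_mod_cast hr)]

end InnerProductSpace

theorem Matrix.toEuclideanLin_conjTranspose_mul_self_apply {m n 𝕜 : Type*} [Fintype m]
    [Fintype n] [DecidableEq m] [DecidableEq n] [RCLike 𝕜] (A : Matrix m n 𝕜)
    (v : EuclideanSpace 𝕜 n) :
    toEuclideanLin (Aᴴ * A) v = (toEuclideanLin A).adjoint (toEuclideanLin A v) := by
  rw [← toEuclideanLin_conjTranspose_eq_adjoint]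
  ext i
  simp [Matrix.mulVec_mulVec]

/-- **Lemma 1.** Let `z` be a right singular vector of the `n × n` complex matrix `A`
corresponding to the singular value `σ > 0` (i.e. `‖z‖ = 1` and `AᴴA z = σ² z`), let `x` be
the exact solution of `A x = b`, and let `x0` be any approximate solution.  Then the scalar
`α = ⟨b - A x0, A z⟩ / ‖A z‖²`, the minimizer of `‖b - A x0 - k • A z‖` over `k ∈ ℂ`, also
minimizes `‖x - x0 - k • z‖` over `k ∈ ℂ`. -/
theorem gmres_sv_lemma1 (n : ℕ) (A : Matrix (Fin n) (Fin n) ℂ)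
    (z b x x0 : EuclideanSpace ℂ (Fin n)) (σ : ℝ) (hσ : 0 < σ)
    (hz : ‖z‖ = 1)
    (hsv : Matrix.toEuclideanLin (Aᴴ * A) z = ((σ : ℂ) ^ 2) • z)
    (hx : Matrix.toEuclideanLin A x = b)
    (α : ℂ)
    (hα : α = (inner ℂ (Matrix.toEuclideanLin A z) (b - Matrix.toEuclideanLin A x0) : ℂ) /
      (‖Matrix.toEuclideanLin A z‖ : ℂ) ^ 2) :
    ∀ k : ℂ, ‖x - x0 - α • z‖ ≤ ‖x - x0 - k • z‖ := by
  rw [toEuclideanLin_conjTranspose_mul_self_apply, ← Complex.ofReal_pow] at hsv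
  rw [← hx, ← map_sub] at hα
  obtain rfl : α = inner ℂ z (x - x0) :=
    hα.trans (inner_map_map_div_norm_map_sq_of_adjoint_map_eq_smul (pow_pos hσ 2).ne' hz hsv _)
  exact norm_sub_inner_smul_le_norm_sub_smul hz (x - x0)
end

section
/- Let A be an n×n complex matrix, let Vₘ be an n×m complex matrix with orthonormal columns (Vₘ*Vₘ = I), let b ∈ ℂⁿ, let x be the exact solution of Ax = b, and let x0 ∈ ℂⁿ be such that x − x0 lies in the range (column space) of Vₘ. Let z ∈ ℂᵐ be a right singular vector of AVₘ corresponding to a singular value σ > 0, i.e., ‖z‖ = 1 and Vₘ*A*AVₘz = σ²z. Then the scalar α = ⟨b − Ax0, AVₘz⟩/‖AVₘz‖², which is the unique minimizer over k ∈ ℂ of ‖b − Ax0 − kAVₘz‖, also minimizes ‖x − x0 − kVₘz‖ over k ∈ ℂ; that is, for every k ∈ ℂ, ‖x − x0 − αVₘz‖ ≤ ‖x − x0 − kVₘz‖. -/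
/-!
Since `z` is a right singular vector of `A Vₘ`, `⟪A Vₘ z, A Vₘ w⟫ = σ² ⟪z, w⟫` for every `w`,
and `Vₘ` is an isometry.  Writing `x - x0 = Vₘ y`, this turns `α` into `⟪Vₘ z, x - x0⟫` with `‖Vₘ z‖ = 1`, so
`α • Vₘ z` is the orthogonal projection of `x - x0` onto the line through `Vₘ z`.
-/

open Matrix

section BestApproximation

variable {𝕜 E : Type*} [RCLike 𝕜] [NormedAddCommGroup E] [InnerProductSpace 𝕜 E]

theorem norm_sub_inner_smul_le_norm_sub_smul_s2 {u : E} (hu : ‖u‖ = 1) (e : E) (k : 𝕜) :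
    ‖e - inner 𝕜 u e • u‖ ≤ ‖e - k • u‖ := by
  rw [← Submodule.starProjection_unit_singleton 𝕜 hu, Submodule.starProjection_minimal]
  exact ciInf_le (f := fun w : 𝕜 ∙ u => ‖e - w‖)
    ⟨0, Set.forall_mem_range.2 fun _ => norm_nonneg _⟩
    ⟨k • u, Submodule.smul_mem _ k (Submodule.mem_span_singleton_self u)⟩

end BestApproximation

namespace Matrix

variable {𝕜 l m n : Type*} [RCLike 𝕜] [Fintype m] [Fintype n] [DecidableEq m] [DecidableEq n]

theorem toEuclideanLin_mul_apply (M : Matrix l m 𝕜) (N : Matrix m n 𝕜)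
    (v : EuclideanSpace 𝕜 n) :
    toEuclideanLin (M * N) v = toEuclideanLin M (toEuclideanLin N v) := by
  ext; simp [mulVec_mulVec]

theorem inner_toEuclideanLin_toEuclideanLin (M : Matrix m n 𝕜) (a c : EuclideanSpace 𝕜 n) :
    inner 𝕜 (toEuclideanLin M a) (toEuclideanLin M c) = inner 𝕜 (toEuclideanLin (Mᴴ * M) a) c := by
  rw [toEuclideanLin_mul_apply, toEuclideanLin_conjTranspose_eq_adjoint,
    LinearMap.adjoint_inner_left]

theorem inner_toEuclideanLin_toEuclideanLin_of_conjTranspose_mul_self_eq_one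
    {M : Matrix m n 𝕜} (hM : Mᴴ * M = 1) (a c : EuclideanSpace 𝕜 n) :
    inner 𝕜 (toEuclideanLin M a) (toEuclideanLin M c) = inner 𝕜 a c := by
  rw [inner_toEuclideanLin_toEuclideanLin, hM]
  simp

theorem inner_toEuclideanLin_toEuclideanLin_of_gram_eigenvector {M : Matrix m n 𝕜}
    {z : EuclideanSpace 𝕜 n} {μ : ℝ} (hz : toEuclideanLin (Mᴴ * M) z = (μ : 𝕜) • z)
    (c : EuclideanSpace 𝕜 n) :
    inner 𝕜 (toEuclideanLin M z) (toEuclideanLin M c) = μ * inner 𝕜 z c := by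
  rw [inner_toEuclideanLin_toEuclideanLin, hz, inner_smul_left, RCLike.conj_ofReal]

end Matrix

/-- **Theorem 3.1.** Let `Vₘ` have orthonormal columns (`Vₘᴴ Vₘ = I`), let `x` solve `A x = b`,
and suppose `x - x0` lies in the range of `Vₘ`.  If `z` is a right singular vector of `A Vₘ`
for the singular value `σ > 0` (i.e. `‖z‖ = 1` and `Vₘᴴ Aᴴ A Vₘ z = σ² z`), then the scalar
`α = ⟨b - A x0, A Vₘ z⟩ / ‖A Vₘ z‖²`, the minimizer of `‖b - A x0 - k • A Vₘ z‖` over `k ∈ ℂ`,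
also minimizes `‖x - x0 - k • Vₘ z‖` over `k ∈ ℂ`. -/
theorem gmres_sv_theorem1 (n m : ℕ) (A : Matrix (Fin n) (Fin n) ℂ)
    (Vm : Matrix (Fin n) (Fin m) ℂ) (hVm : Vmᴴ * Vm = 1)
    (b x x0 : EuclideanSpace ℂ (Fin n)) (z : EuclideanSpace ℂ (Fin m))
    (σ : ℝ) (hσ : 0 < σ) (hz : ‖z‖ = 1)
    (hsv : Matrix.toEuclideanLin (Vmᴴ * Aᴴ * A * Vm) z = ((σ : ℂ) ^ 2) • z)
    (hx : Matrix.toEuclideanLin A x = b)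
    (hx0 : ∃ y : EuclideanSpace ℂ (Fin m), x - x0 = Matrix.toEuclideanLin Vm y)
    (α : ℂ)
    (hα : α = (inner ℂ (Matrix.toEuclideanLin A (Matrix.toEuclideanLin Vm z))
        (b - Matrix.toEuclideanLin A x0) : ℂ) /
      (‖Matrix.toEuclideanLin A (Matrix.toEuclideanLin Vm z)‖ : ℂ) ^ 2) :
    ∀ k : ℂ, ‖x - x0 - α • Matrix.toEuclideanLin Vm z‖ ≤
      ‖x - x0 - k • Matrix.toEuclideanLin Vm z‖ := by
  obtain ⟨y, hy⟩ := hx0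
  have hgram : ∀ c, inner ℂ (toEuclideanLin (A * Vm) z) (toEuclideanLin (A * Vm) c) =
      (σ ^ 2 : ℝ) * inner ℂ z c := by
    refine inner_toEuclideanLin_toEuclideanLin_of_gram_eigenvector (M := A * Vm) (μ := σ ^ 2) ?_
    rw [conjTranspose_mul, ← Matrix.mul_assoc]
    exact_mod_cast hsv
  have hnorm : (‖toEuclideanLin A (toEuclideanLin Vm z)‖ : ℂ) ^ 2 = (σ ^ 2 : ℝ) := by
    have h := hgram z
    rw [inner_self_eq_norm_sq_to_K, inner_self_eq_norm_sq_to_K, hz] at h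
    simpa [toEuclideanLin_mul_apply] using h
  have hαu : α = inner ℂ (toEuclideanLin Vm z) (x - x0) := by
    have hσ2 : ((σ ^ 2 : ℝ) : ℂ) ≠ 0 := by exact_mod_cast (pow_pos hσ 2).ne'
    rw [hα, hnorm, ← hx, ← map_sub, hy, ← toEuclideanLin_mul_apply, ← toEuclideanLin_mul_apply,
      hgram, mul_div_cancel_left₀ _ hσ2,
      inner_toEuclideanLin_toEuclideanLin_of_conjTranspose_mul_self_eq_one hVm]
  have hu : ‖toEuclideanLin Vm z‖ = 1 := by
    rw [norm_eq_sqrt_re_inner (𝕜 := ℂ),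
      inner_toEuclideanLin_toEuclideanLin_of_conjTranspose_mul_self_eq_one hVm,
      ← norm_eq_sqrt_re_inner, hz]
  rw [hαu]
  exact norm_sub_inner_smul_le_norm_sub_smul_s2 hu (x - x0)
end

section
/- Let A be an n×n complex matrix, let Vₘ be an n×m complex matrix with Vₘ*Vₘ = I, let z ∈ ℂᵐ satisfy ‖z‖ = 1 and Vₘ*A*AVₘz = σ²z for some σ > 0, let b ∈ ℂⁿ, let x be the exact solution of Ax = b, and let x0 ∈ ℂⁿ. Define α₁ = ⟨b − Ax0, AVₘz⟩/‖AVₘz‖² and α₂ = ⟨x − x0, Vₘz⟩. Then α₁ − α₂ = ⟨x − x0, (A*A − σ²I)Vₘz⟩/σ². -/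
/-!
Since `Vₘᴴ Aᴴ A Vₘ z = σ² z` and `‖z‖ = 1`, moving `A Vₘ` across the inner product gives
`‖A Vₘ z‖² = ⟨z, σ² z⟩ = σ²`. With `A (x - x0) = b - A x0`, moving `A` across once more turns
`α₁` into `⟨Aᴴ A (x - x0), Vₘ z⟩ / σ²`, and subtracting `α₂ = σ² ⟨x - x0, Vₘ z⟩ / σ²` gives the
claim; `σ` being real is what lets `σ²` pass through the conjugate-linear slot unchanged.
-/

open Matrix

namespace LinearMap

variable {𝕜 E F : Type*} [RCLike 𝕜] [NormedAddCommGroup E] [InnerProductSpace 𝕜 E]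
  [FiniteDimensional 𝕜 E] [NormedAddCommGroup F] [InnerProductSpace 𝕜 F] [FiniteDimensional 𝕜 F]

theorem norm_apply_sq_eq_of_adjoint_comp_self_apply_eq_smul {T : E →ₗ[𝕜] F} {z : E} {r : ℝ}
    (h : (T.adjoint ∘ₗ T) z = (r : 𝕜) • z) : ‖T z‖ ^ 2 = r * ‖z‖ ^ 2 := by
  rw [@norm_sq_eq_re_inner 𝕜, ← adjoint_inner_right, ← comp_apply, h, inner_smul_right,
    inner_self_eq_norm_sq_to_K]
  norm_cast

theorem inner_map_map_div_sub_inner_eq (T : E →ₗ[𝕜] F) (w y : E) {r : ℝ} (hr : r ≠ 0) :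
    inner 𝕜 (T w) (T y) / r - inner 𝕜 w y =
      inner 𝕜 ((T.adjoint ∘ₗ T - (r : 𝕜) • LinearMap.id : E →ₗ[𝕜] E) w) y / r := by
  rw [sub_apply, inner_sub_left, smul_apply, inner_smul_left, comp_apply, adjoint_inner_left,
    RCLike.conj_ofReal, id_apply, sub_div, mul_div_cancel_left₀ _ (RCLike.ofReal_ne_zero.2 hr)]

end LinearMap

theorem Matrix.toEuclideanLin_conjTranspose_mul_self_sub_smul_one {𝕜 m n : Type*} [RCLike 𝕜]
    [Fintype m] [DecidableEq m] [Fintype n] [DecidableEq n] (A : Matrix m n 𝕜) (c : 𝕜) :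
    toEuclideanLin (Aᴴ * A - c • 1) =
      (toEuclideanLin A).adjoint ∘ₗ toEuclideanLin A - c • LinearMap.id := by
  simp [toEuclideanLin_conjTranspose_eq_adjoint]

/-- The paper's inner product `⟨a, b⟩`, linear in the first slot, is Mathlib's `inner b a`. -/
theorem gmres_sv_alpha_difference_general (n m : ℕ) (A : Matrix (Fin n) (Fin n) ℂ)
    (Vm : Matrix (Fin n) (Fin m) ℂ)
    (b x x0 : EuclideanSpace ℂ (Fin n)) (z : EuclideanSpace ℂ (Fin m))
    (σ : ℝ) (hσ : 0 < σ) (hz : ‖z‖ = 1)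
    (hsv : Matrix.toEuclideanLin (Vmᴴ * Aᴴ * A * Vm) z = ((σ : ℂ) ^ 2) • z)
    (hx : Matrix.toEuclideanLin A x = b)
    (α₁ α₂ : ℂ)
    (hα₁ : α₁ = (inner ℂ (Matrix.toEuclideanLin A (Matrix.toEuclideanLin Vm z))
        (b - Matrix.toEuclideanLin A x0) : ℂ) /
      (‖Matrix.toEuclideanLin A (Matrix.toEuclideanLin Vm z)‖ : ℂ) ^ 2)
    (hα₂ : α₂ = (inner ℂ (Matrix.toEuclideanLin Vm z) (x - x0) : ℂ)) :
    α₁ - α₂ = (inner ℂ (Matrix.toEuclideanLin (Aᴴ * A - ((σ : ℂ) ^ 2) • 1)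
        (Matrix.toEuclideanLin Vm z)) (x - x0) : ℂ) / ((σ : ℂ) ^ 2) := by
  have hAVz : ‖toEuclideanLin A (toEuclideanLin Vm z)‖ ^ 2 = σ ^ 2 := by
    set T := toEuclideanLin A ∘ₗ toEuclideanLin Vm
    have hT : (T.adjoint ∘ₗ T) z = ((σ ^ 2 : ℝ) : ℂ) • z := by
      simpa [T, LinearMap.adjoint_comp, ← toEuclideanLin_conjTranspose_eq_adjoint] using hsv
    rw [← mul_one (σ ^ 2), ← one_pow 2, ← hz]
    exact LinearMap.norm_apply_sq_eq_of_adjoint_comp_self_apply_eq_smul hT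
  have hres : toEuclideanLin A (x - x0) = b - toEuclideanLin A x0 := by rw [map_sub, hx]
  rw [hα₁, hα₂, ← hres, ← Complex.ofReal_pow, hAVz,
    toEuclideanLin_conjTranspose_mul_self_sub_smul_one, ← Complex.ofReal_pow]
  exact LinearMap.inner_map_map_div_sub_inner_eq _ _ _ (pow_ne_zero 2 hσ.ne')

/-- With `Vₘᴴ Vₘ = I`, `‖z‖ = 1`, `Vₘᴴ Aᴴ A Vₘ z = σ² z` (`σ > 0`) and `A x = b`, the scalars
`α₁ = ⟨b - A x0, A Vₘ z⟩ / ‖A Vₘ z‖²` and `α₂ = ⟨x - x0, Vₘ z⟩` satisfy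
`α₁ - α₂ = ⟨x - x0, (Aᴴ A - σ² I) Vₘ z⟩ / σ²`.  (The paper's inner product `⟨a, b⟩`, linear in
the first slot, corresponds to Mathlib's `inner b a`.) -/
theorem gmres_sv_alpha_difference (n m : ℕ) (A : Matrix (Fin n) (Fin n) ℂ)
    (Vm : Matrix (Fin n) (Fin m) ℂ) (hVm : Vmᴴ * Vm = 1)
    (b x x0 : EuclideanSpace ℂ (Fin n)) (z : EuclideanSpace ℂ (Fin m))
    (σ : ℝ) (hσ : 0 < σ) (hz : ‖z‖ = 1)
    (hsv : Matrix.toEuclideanLin (Vmᴴ * Aᴴ * A * Vm) z = ((σ : ℂ) ^ 2) • z)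
    (hx : Matrix.toEuclideanLin A x = b)
    (α₁ α₂ : ℂ)
    (hα₁ : α₁ = (inner ℂ (Matrix.toEuclideanLin A (Matrix.toEuclideanLin Vm z))
        (b - Matrix.toEuclideanLin A x0) : ℂ) /
      (‖Matrix.toEuclideanLin A (Matrix.toEuclideanLin Vm z)‖ : ℂ) ^ 2)
    (hα₂ : α₂ = (inner ℂ (Matrix.toEuclideanLin Vm z) (x - x0) : ℂ)) :
    α₁ - α₂ = (inner ℂ (Matrix.toEuclideanLin (Aᴴ * A - ((σ : ℂ) ^ 2) • 1)
        (Matrix.toEuclideanLin Vm z)) (x - x0) : ℂ) / ((σ : ℂ) ^ 2) :=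
  gmres_sv_alpha_difference_general n m A Vm b x x0 z σ hσ hz hsv hx α₁ α₂ hα₁ hα₂
end

section
/- Let A be an n×n complex matrix, let Vₘ be an n×m complex matrix with Vₘ*Vₘ = I, let z ∈ ℂᵐ satisfy ‖z‖ = 1 and Vₘ*A*AVₘz = σ²z for some σ > 0, let b ∈ ℂⁿ, let x be the exact solution of Ax = b, and let x0 ∈ ℂⁿ. Let α₁ = ⟨b − Ax0, AVₘz⟩/‖AVₘz‖² be the minimizer over k ∈ ℂ of ‖b − Ax0 − kAVₘz‖, and let α₂ = ⟨x − x0, Vₘz⟩ be the minimizer over k ∈ ℂ of ‖x − x0 − kVₘz‖. Then ‖x − x0 − α₁Vₘz‖² − ‖x − x0 − α₂Vₘz‖² = |⟨x − x0, (A*A − σ²I)Vₘz⟩|²/σ⁴. -/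
/-!
With `v = Vₘ z`, a unit vector, Pythagoras gives `‖e - α v‖² = ‖e - α₂ v‖² + |α - α₂|²` for
`e = x - x0`, so the left-hand side is `|α₁ - α₂|²`. Since `‖A v‖ = σ` and `b - A x0 = A e`,
`σ² α₁ = ⟨A e, A v⟩ = ⟨e, Aᴴ A v⟩`, hence `σ² (α₁ - α₂) = ⟨e, (Aᴴ A - σ² I) v⟩`.
Here `⟨a, b⟩` is the paper's inner product, linear in `a`, i.e. Mathlib's `⟪b, a⟫`.
-/

open Matrix
open scoped InnerProductSpace ComplexConjugate

section UnitVector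

variable {𝕜 E : Type*} [RCLike 𝕜] [NormedAddCommGroup E] [InnerProductSpace 𝕜 E] {v : E}

theorem norm_sub_smul_sq_of_norm_eq_one (hv : ‖v‖ = 1) (e : E) (α : 𝕜) :
    ‖e - α • v‖ ^ 2 = ‖e - ⟪v, e⟫_𝕜 • v‖ ^ 2 + ‖α - ⟪v, e⟫_𝕜‖ ^ 2 := by
  have hvv : ⟪v, v⟫_𝕜 = 1 := by simp [inner_self_eq_norm_sq_to_K, hv]
  have horth : ⟪e - ⟪v, e⟫_𝕜 • v, (⟪v, e⟫_𝕜 - α) • v⟫_𝕜 = 0 := by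
    simp only [inner_smul_right, inner_sub_left, inner_smul_left, hvv, inner_conj_symm]
    ring
  have hsplit : e - α • v = (e - ⟪v, e⟫_𝕜 • v) + (⟪v, e⟫_𝕜 - α) • v := by
    rw [sub_smul]; abel
  rw [hsplit, sq, sq, sq, norm_add_sq_eq_norm_sq_add_norm_sq_of_inner_eq_zero _ _ horth,
    norm_smul, hv, mul_one, norm_sub_rev (⟪v, e⟫_𝕜)]

theorem norm_sub_div_smul_sq_sub_norm_sub_inner_smul_sq (hv : ‖v‖ = 1) (e : E) (c : 𝕜) {σ : ℝ}
    (hσ : σ ≠ 0) :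
    ‖e - (c / (σ : 𝕜) ^ 2) • v‖ ^ 2 - ‖e - ⟪v, e⟫_𝕜 • v‖ ^ 2 =
      ‖c - (σ : 𝕜) ^ 2 * ⟪v, e⟫_𝕜‖ ^ 2 / σ ^ 4 := by
  have hσ' : (σ : 𝕜) ^ 2 ≠ 0 := by simpa using hσ
  have hcoeff : c / (σ : 𝕜) ^ 2 - ⟪v, e⟫_𝕜 = (c - (σ : 𝕜) ^ 2 * ⟪v, e⟫_𝕜) / (σ : 𝕜) ^ 2 := by
    rw [sub_div, mul_div_cancel_left₀ _ hσ']
  rw [norm_sub_smul_sq_of_norm_eq_one hv e (c / _), add_sub_cancel_left, hcoeff, norm_div,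
    norm_pow, RCLike.norm_ofReal, sq_abs, div_pow, ← pow_mul]

end UnitVector

namespace Matrix

variable {𝕜 m n : Type*} [RCLike 𝕜] [Fintype m] [DecidableEq m] [Fintype n] [DecidableEq n]

theorem inner_toEuclideanLin_conjTranspose_left (M : Matrix m n 𝕜) (u : EuclideanSpace 𝕜 m)
    (w : EuclideanSpace 𝕜 n) : ⟪toEuclideanLin Mᴴ u, w⟫_𝕜 = ⟪u, toEuclideanLin M w⟫_𝕜 := by
  rw [toEuclideanLin_conjTranspose_eq_adjoint, LinearMap.adjoint_inner_left]

theorem inner_toEuclideanLin_conjTranspose_right (M : Matrix m n 𝕜) (u : EuclideanSpace 𝕜 n)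
    (w : EuclideanSpace 𝕜 m) : ⟪u, toEuclideanLin Mᴴ w⟫_𝕜 = ⟪toEuclideanLin M u, w⟫_𝕜 := by
  rw [toEuclideanLin_conjTranspose_eq_adjoint, LinearMap.adjoint_inner_right]

theorem norm_toEuclideanLin_sq (M : Matrix m n 𝕜) (z : EuclideanSpace 𝕜 n) :
    (‖toEuclideanLin M z‖ : 𝕜) ^ 2 = ⟪z, toEuclideanLin (Mᴴ * M) z⟫_𝕜 := by
  rw [toLpLin_mul_same, LinearMap.comp_apply, inner_toEuclideanLin_conjTranspose_right,
    inner_self_eq_norm_sq_to_K]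

theorem norm_toEuclideanLin_eq_of_conjTranspose_mul_self_apply {M : Matrix m n 𝕜}
    {z : EuclideanSpace 𝕜 n} {σ : ℝ} (h : toEuclideanLin (Mᴴ * M) z = (σ : 𝕜) ^ 2 • z)
    (hσ : 0 ≤ σ) : ‖toEuclideanLin M z‖ = σ * ‖z‖ := by
  have hsq : (‖toEuclideanLin M z‖ : 𝕜) ^ 2 = ((σ * ‖z‖ : ℝ) : 𝕜) ^ 2 := by
    rw [norm_toEuclideanLin_sq, h, inner_smul_right, inner_self_eq_norm_sq_to_K]
    push_cast
    ring
  exact (pow_left_inj₀ (norm_nonneg _) (by positivity) two_ne_zero).1 (by exact_mod_cast hsq)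

theorem inner_toEuclideanLin_conjTranspose_mul_self_sub_smul (A : Matrix m n 𝕜) (c : 𝕜)
    (v e : EuclideanSpace 𝕜 n) :
    ⟪toEuclideanLin (Aᴴ * A - c • 1) v, e⟫_𝕜 =
      ⟪toEuclideanLin A v, toEuclideanLin A e⟫_𝕜 - conj c * ⟪v, e⟫_𝕜 := by
  simp [inner_sub_left, inner_smul_left, inner_toEuclideanLin_conjTranspose_left]

end Matrix

/-- **Theorem 3.2.** With `Vₘᴴ Vₘ = I`, `‖z‖ = 1`, `Vₘᴴ Aᴴ A Vₘ z = σ² z` (`σ > 0`) and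
`A x = b`, let `α₁ = ⟨b - A x0, A Vₘ z⟩ / ‖A Vₘ z‖²` (the minimizer of
`‖b - A x0 - k • A Vₘ z‖`) and `α₂ = ⟨x - x0, Vₘ z⟩` (the minimizer of
`‖x - x0 - k • Vₘ z‖`).  Then
`‖x - x0 - α₁ Vₘ z‖² - ‖x - x0 - α₂ Vₘ z‖² = |⟨x - x0, (Aᴴ A - σ² I) Vₘ z⟩|² / σ⁴`.
(The paper's inner product `⟨a, b⟩`, linear in the first slot, corresponds to Mathlib's
`inner b a`.) -/
theorem gmres_sv_theorem2 (n m : ℕ) (A : Matrix (Fin n) (Fin n) ℂ)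
    (Vm : Matrix (Fin n) (Fin m) ℂ) (hVm : Vmᴴ * Vm = 1)
    (b x x0 : EuclideanSpace ℂ (Fin n)) (z : EuclideanSpace ℂ (Fin m))
    (σ : ℝ) (hσ : 0 < σ) (hz : ‖z‖ = 1)
    (hsv : Matrix.toEuclideanLin (Vmᴴ * Aᴴ * A * Vm) z = ((σ : ℂ) ^ 2) • z)
    (hx : Matrix.toEuclideanLin A x = b)
    (α₁ α₂ : ℂ)
    (hα₁ : α₁ = (inner ℂ (Matrix.toEuclideanLin A (Matrix.toEuclideanLin Vm z))
        (b - Matrix.toEuclideanLin A x0) : ℂ) /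
      (‖Matrix.toEuclideanLin A (Matrix.toEuclideanLin Vm z)‖ : ℂ) ^ 2)
    (hα₂ : α₂ = (inner ℂ (Matrix.toEuclideanLin Vm z) (x - x0) : ℂ)) :
    ‖x - x0 - α₁ • Matrix.toEuclideanLin Vm z‖ ^ 2 -
      ‖x - x0 - α₂ • Matrix.toEuclideanLin Vm z‖ ^ 2 =
    ‖(inner ℂ (Matrix.toEuclideanLin (Aᴴ * A - ((σ : ℂ) ^ 2) • 1)
        (Matrix.toEuclideanLin Vm z)) (x - x0) : ℂ)‖ ^ 2 / σ ^ 4 := by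
  set v := toEuclideanLin Vm z
  have hv : ‖v‖ = 1 := by
    rw [norm_toEuclideanLin_eq_of_conjTranspose_mul_self_apply (σ := 1) (by simp [hVm])
      zero_le_one, one_mul, hz]
  have hAv : ‖toEuclideanLin A v‖ = σ := by
    have hgram : toEuclideanLin ((A * Vm)ᴴ * (A * Vm)) z = (σ : ℂ) ^ 2 • z := by
      simpa only [conjTranspose_mul, Matrix.mul_assoc] using hsv
    rw [← LinearMap.comp_apply, ← toLpLin_mul_same,
      norm_toEuclideanLin_eq_of_conjTranspose_mul_self_apply hgram hσ.le, hz, mul_one]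
  have hres : b - toEuclideanLin A x0 = toEuclideanLin A (x - x0) := by rw [← hx, map_sub]
  rw [hα₁, hα₂, hres, hAv, inner_toEuclideanLin_conjTranspose_mul_self_sub_smul,
    ← Complex.ofReal_pow, Complex.conj_ofReal, Complex.ofReal_pow]
  exact norm_sub_div_smul_sq_sub_norm_sub_inner_smul_sq hv _ _ hσ.ne'
end

section
/- Let n, m, k be positive integers with m + k < n, let A be an n×n complex matrix, let Y_k be an n×k complex matrix, let r₀ ∈ ℂⁿ be nonzero with v = r₀/‖r₀‖, and let q be a polynomial of degree m with q(0) = 0. Suppose the n×(1+k) matrix U = (q(A)v, AY_k), whose first column is q(A)v and whose remaining columns are those of AY_k, has full column rank. Let r_s ∈ ℂⁿ be any vector of the form r_s = r₀ − y with y in the column space of U and satisfying ‖r_s‖ ≤ ‖r₀ − w‖ for all w in the column space of U. Then ‖r_s‖²/‖r₀‖² ≤ 1 − min over unit vectors w ∈ ℂⁿ of (|w*q(A)w|² + ‖w*AY_k‖²)/(‖q(A)‖² + ‖AY_k‖_F²), where ‖q(A)‖ is the spectral (operator 2-) norm of q(A) and ‖·‖_F is the Frobenius norm. -/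
/-! Let `T` be the linear map of `U` and `C = ‖U‖_F²`, so that `‖T c‖² ≤ C ‖c‖²`. Testing the
optimality of `r_s` against `c = C⁻¹ T* r₀` gives `‖T* r₀‖² ≤ C (‖r₀‖² - ‖r_s‖²)`. Now
`T* r₀ = ‖r₀‖ U* v`, whose entries are `⟪q(A) v, v⟫` and those of `(A Y)* v`, and
`C = ‖q(A) v‖² + ‖A Y‖_F² ≤ ‖q(A)‖² + ‖A Y‖_F²`; so the bound holds with the quotient taken at
`w = v`, hence with its minimum. -/

open Matrix

/-- The Frobenius norm of a complex matrix. -/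
noncomputable def frobeniusNorm {n k : ℕ} (M : Matrix (Fin n) (Fin k) ℂ) : ℝ :=
  Real.sqrt (∑ i, ∑ j, ‖M i j‖ ^ 2)

open scoped InnerProductSpace

section BestApproximation

variable {𝕜 E F : Type*} [RCLike 𝕜] [NormedAddCommGroup E] [InnerProductSpace 𝕜 E]
  [NormedAddCommGroup F] [InnerProductSpace 𝕜 F] [FiniteDimensional 𝕜 E] [FiniteDimensional 𝕜 F]

theorem LinearMap.norm_adjoint_apply_sq_le_of_forall_norm_le (T : E →ₗ[𝕜] F) {C : ℝ}
    (hC : 0 ≤ C) (hT : ∀ x, ‖T x‖ ^ 2 ≤ C * ‖x‖ ^ 2) {r s : F} (hs : ∀ c, ‖s‖ ≤ ‖r - T c‖) :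
    ‖T.adjoint r‖ ^ 2 ≤ C * (‖r‖ ^ 2 - ‖s‖ ^ 2) := by
  set a := T.adjoint r
  have hinner : ⟪r, T a⟫_𝕜 = (‖a‖ ^ 2 : ℝ) := by
    rw [← LinearMap.adjoint_inner_left, inner_self_eq_norm_sq_to_K]; norm_cast
  rcases hC.eq_or_lt with rfl | hC
  · have hTa : T a = 0 := by simpa using hT a
    rw [hTa, inner_zero_right, eq_comm] at hinner
    simpa using hinner
  · set c : E := ((C⁻¹ : ℝ) : 𝕜) • a
    have hre : RCLike.re ⟪r, T c⟫_𝕜 = C⁻¹ * ‖a‖ ^ 2 := by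
      rw [map_smul, inner_smul_right, hinner, ← RCLike.ofReal_mul, RCLike.ofReal_re]
    have hTc : ‖T c‖ ^ 2 ≤ C⁻¹ * ‖a‖ ^ 2 :=
      calc ‖T c‖ ^ 2 ≤ C * ‖c‖ ^ 2 := hT c
        _ = C⁻¹ * ‖a‖ ^ 2 := by
          rw [norm_smul, RCLike.norm_ofReal, abs_of_pos (inv_pos.2 hC)]; field_simp
    have hsc : ‖s‖ ^ 2 ≤ ‖r - T c‖ ^ 2 := pow_le_pow_left₀ (norm_nonneg _) (hs c) 2
    rw [norm_sub_sq (𝕜 := 𝕜), hre] at hsc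
    calc ‖a‖ ^ 2 = C * (C⁻¹ * ‖a‖ ^ 2) := by field_simp
      _ ≤ C * (‖r‖ ^ 2 - ‖s‖ ^ 2) := by gcongr; linarith

end BestApproximation

namespace Matrix

variable {𝕜 α m n ι : Type*} [RCLike 𝕜] [Fintype m] [Fintype n]

theorem norm_toEuclideanLin_apply_sq_le [DecidableEq n] (M : Matrix m n 𝕜)
    (x : EuclideanSpace 𝕜 n) :
    ‖M.toEuclideanLin x‖ ^ 2 ≤ (∑ i, ∑ j, ‖M i j‖ ^ 2) * ‖x‖ ^ 2 := by
  have hrow (i : m) : ‖(M *ᵥ x.ofLp) i‖ ^ 2 ≤ (∑ j, ‖M i j‖ ^ 2) * ‖x‖ ^ 2 := by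
    rw [EuclideanSpace.norm_sq_eq]
    calc ‖(M *ᵥ x.ofLp) i‖ ^ 2 ≤ (∑ j, ‖M i j‖ * ‖x.ofLp j‖) ^ 2 := by
          gcongr
          simp only [mulVec, dotProduct, ← norm_mul]
          exact norm_sum_le _ _
      _ ≤ _ := Finset.sum_mul_sq_le_sq_mul_sq _ _ _
  rw [toLpLin_apply, EuclideanSpace.norm_sq_eq, Finset.sum_mul]
  exact Finset.sum_le_sum fun i _ => hrow i

theorem sum_norm_sq_fromCols {n₁ n₂ : Type*} [Fintype n₁] [Fintype n₂] [Norm α]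
    (A : Matrix m n₁ α) (B : Matrix m n₂ α) :
    ∑ i, ∑ j, ‖fromCols A B i j‖ ^ 2 = ∑ i, ∑ j, ‖A i j‖ ^ 2 + ∑ i, ∑ j, ‖B i j‖ ^ 2 := by
  simp only [Fintype.sum_sum_type, fromCols_apply_inl, fromCols_apply_inr,
    Finset.sum_add_distrib]

theorem sum_norm_sq_replicateCol [Fintype ι] [Unique ι] (u : m → 𝕜) :
    ∑ i, ∑ j : ι, ‖replicateCol ι u i j‖ ^ 2 = ‖WithLp.toLp 2 u‖ ^ 2 := by
  simp [EuclideanSpace.norm_sq_eq]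

variable [DecidableEq m]

theorem norm_toEuclideanLin_conjTranspose_fromCols_apply_sq {n₁ n₂ : Type*} [Fintype n₁]
    [Fintype n₂] (A : Matrix m n₁ 𝕜) (B : Matrix m n₂ 𝕜) (x : EuclideanSpace 𝕜 m) :
    ‖(fromCols A B)ᴴ.toEuclideanLin x‖ ^ 2 =
      ‖Aᴴ.toEuclideanLin x‖ ^ 2 + ‖Bᴴ.toEuclideanLin x‖ ^ 2 := by
  simp only [toLpLin_apply, EuclideanSpace.norm_sq_eq,
    conjTranspose_fromCols_eq_fromRows_conjTranspose, fromRows_mulVec, Fintype.sum_sum_type]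
  rfl

theorem norm_toEuclideanLin_conjTranspose_replicateCol_apply_sq [Fintype ι] [Unique ι] (u : m → 𝕜)
    (x : EuclideanSpace 𝕜 m) :
    ‖(replicateCol ι u)ᴴ.toEuclideanLin x‖ ^ 2 = ‖⟪WithLp.toLp 2 u, x⟫_𝕜‖ ^ 2 := by
  rw [EuclideanSpace.norm_sq_eq, Fintype.sum_unique, EuclideanSpace.inner_eq_star_dotProduct,
    conjTranspose_replicateCol, toLpLin_apply]
  simp [replicateRow_mulVec_eq_const, dotProduct_comm]

end Matrix

theorem frobeniusNorm_sq {n k : ℕ} (M : Matrix (Fin n) (Fin k) ℂ) :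
    frobeniusNorm M ^ 2 = ∑ i, ∑ j, ‖M i j‖ ^ 2 :=
  Real.sq_sqrt (by positivity)

/-- For `D = 0` the right-hand side is `1`, as `N / 0 = 0`. -/
theorem div_le_one_sub_div_of_mul_le {a s N D : ℝ} (ha : 0 < a) (hD : 0 ≤ D) (hs : s ≤ a)
    (h : a * N ≤ D * (a - s)) : s / a ≤ 1 - N / D := by
  rcases hD.eq_or_lt with rfl | hD
  · rw [div_zero, sub_zero, div_le_one ha]
    exact hs
  · rw [le_sub_comm, div_le_iff₀ hD, one_sub_div ha.ne', div_mul_eq_mul_div, le_div_iff₀ ha]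
    linarith

theorem gmres_sv_convergence_bound_general (n k : ℕ)
    (A : Matrix (Fin n) (Fin n) ℂ) (Y : Matrix (Fin n) (Fin k) ℂ)
    (r₀ : EuclideanSpace ℂ (Fin n)) (hr₀ : r₀ ≠ 0)
    (v : EuclideanSpace ℂ (Fin n)) (hv : v = (‖r₀‖⁻¹ : ℝ) • r₀)
    (q : Polynomial ℂ)
    (U : Matrix (Fin n) (Fin 1 ⊕ Fin k) ℂ)
    (hU : U = Matrix.fromCols
      (Matrix.replicateCol (Fin 1) ((Polynomial.aeval A q).mulVec v)) (A * Y))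
    (rs : EuclideanSpace ℂ (Fin n))
    (hopt : ∀ c : EuclideanSpace ℂ (Fin 1 ⊕ Fin k),
      ‖rs‖ ≤ ‖r₀ - Matrix.toEuclideanLin U c‖) :
    ‖rs‖ ^ 2 / ‖r₀‖ ^ 2 ≤ 1 -
      ⨅ w : {w : EuclideanSpace ℂ (Fin n) // ‖w‖ = 1},
        (‖(inner ℂ (w : EuclideanSpace ℂ (Fin n))
              (Matrix.toEuclideanLin (Polynomial.aeval A q) w) : ℂ)‖ ^ 2 +
          ‖Matrix.toEuclideanLin (A * Y)ᴴ (w : EuclideanSpace ℂ (Fin n))‖ ^ 2) /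
        (‖Matrix.toEuclideanCLM (𝕜 := ℂ) (Polynomial.aeval A q)‖ ^ 2 +
          frobeniusNorm (A * Y) ^ 2) := by
  set qA := Polynomial.aeval A q
  set N := ‖⟪v, qA.toEuclideanLin v⟫_ℂ‖ ^ 2 + ‖(A * Y)ᴴ.toEuclideanLin v‖ ^ 2
  set D := ‖toEuclideanCLM (𝕜 := ℂ) qA‖ ^ 2 + frobeniusNorm (A * Y) ^ 2
  have hv1 : ‖v‖ = 1 := hv ▸ norm_smul_inv_norm (𝕜 := ℝ) hr₀
  have hr₀v : r₀ = ‖r₀‖ • v := by rw [hv, smul_inv_smul₀ (norm_ne_zero_iff.2 hr₀)]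
  have hUv : ‖Uᴴ.toEuclideanLin v‖ ^ 2 = N := by
    rw [hU, norm_toEuclideanLin_conjTranspose_fromCols_apply_sq,
      norm_toEuclideanLin_conjTranspose_replicateCol_apply_sq, norm_inner_symm]
    rfl
  have hUD : ∑ i, ∑ j, ‖U i j‖ ^ 2 ≤ D := by
    rw [hU, sum_norm_sq_fromCols, sum_norm_sq_replicateCol, ← frobeniusNorm_sq]
    have hqAv := (toEuclideanCLM (𝕜 := ℂ) qA).unit_le_opNorm v hv1.le
    exact add_le_add_left (pow_le_pow_left₀ (norm_nonneg _) hqAv 2) _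
  have hadj : ‖U.toEuclideanLin.adjoint r₀‖ = ‖r₀‖ * ‖Uᴴ.toEuclideanLin v‖ := by
    rw [← toEuclideanLin_conjTranspose_eq_adjoint, hr₀v, LinearMap.map_smul_of_tower, norm_smul,
      norm_norm, ← hr₀v]
  have hproj := U.toEuclideanLin.norm_adjoint_apply_sq_le_of_forall_norm_le (by positivity)
    (norm_toEuclideanLin_apply_sq_le U) hopt
  rw [hadj, mul_pow, hUv] at hproj
  have hrs : ‖rs‖ ≤ ‖r₀‖ := by simpa using hopt 0
  refine (div_le_one_sub_div_of_mul_le (N := N) (D := D) (by positivity) (by positivity)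
    (pow_le_pow_left₀ (norm_nonneg _) hrs 2) (hproj.trans ?_)).trans (sub_le_sub_left ?_ 1)
  · gcongr
    exact sub_nonneg.2 (pow_le_pow_left₀ (norm_nonneg _) hrs 2)
  · refine ciInf_le_of_le ⟨0, ?_⟩ ⟨v, hv1⟩ le_rfl
    rintro _ ⟨w, rfl⟩
    positivity

/-- **Theorem 3.3.** Let `m + k < n`, let `r₀ ≠ 0` with `v = r₀ / ‖r₀‖`, and let `q` be a
polynomial of degree `m` with `q(0) = 0`.  Suppose the `n × (1 + k)` matrix
`U = (q(A) v, A Y_k)` has full column rank, and let `r_s = r₀ - y` with `y` in the column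
space of `U` and `‖r_s‖ ≤ ‖r₀ - w‖` for every `w` in the column space of `U`.  Then
`‖r_s‖² / ‖r₀‖² ≤ 1 - min_{‖w‖=1} (|wᴴ q(A) w|² + ‖wᴴ A Y_k‖²) / (‖q(A)‖² + ‖A Y_k‖_F²)`,
where `‖q(A)‖` is the spectral norm. -/
theorem gmres_sv_convergence_bound (n m k : ℕ) (hmk : m + k < n)
    (A : Matrix (Fin n) (Fin n) ℂ) (Y : Matrix (Fin n) (Fin k) ℂ)
    (r₀ : EuclideanSpace ℂ (Fin n)) (hr₀ : r₀ ≠ 0)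
    (v : EuclideanSpace ℂ (Fin n)) (hv : v = (‖r₀‖⁻¹ : ℝ) • r₀)
    (q : Polynomial ℂ) (hqdeg : q.natDegree = m) (hq0 : q.eval 0 = 0)
    (U : Matrix (Fin n) (Fin 1 ⊕ Fin k) ℂ)
    (hU : U = Matrix.fromCols
      (Matrix.replicateCol (Fin 1) ((Polynomial.aeval A q).mulVec v)) (A * Y))
    (hUrank : U.rank = 1 + k)
    (rs y : EuclideanSpace ℂ (Fin n)) (hrs : rs = r₀ - y)
    (hy : ∃ c : EuclideanSpace ℂ (Fin 1 ⊕ Fin k), y = Matrix.toEuclideanLin U c)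
    (hopt : ∀ c : EuclideanSpace ℂ (Fin 1 ⊕ Fin k),
      ‖rs‖ ≤ ‖r₀ - Matrix.toEuclideanLin U c‖) :
    ‖rs‖ ^ 2 / ‖r₀‖ ^ 2 ≤ 1 -
      ⨅ w : {w : EuclideanSpace ℂ (Fin n) // ‖w‖ = 1},
        (‖(inner ℂ (w : EuclideanSpace ℂ (Fin n))
              (Matrix.toEuclideanLin (Polynomial.aeval A q) w) : ℂ)‖ ^ 2 +
          ‖Matrix.toEuclideanLin (A * Y)ᴴ (w : EuclideanSpace ℂ (Fin n))‖ ^ 2) /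
        (‖Matrix.toEuclideanCLM (𝕜 := ℂ) (Polynomial.aeval A q)‖ ^ 2 +
          frobeniusNorm (A * Y) ^ 2) :=
  gmres_sv_convergence_bound_general n k A Y r₀ hr₀ v hv q U hU rs hopt
end
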